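/- Let f : (0,1] → {0,1} be defined by f(x) = 1 if x ∈ (2^{−n−1}, 2^{−n}] for some even integer n ≥ 0, and f(x) = 0 otherwise. Fix a positive integer N, let K ≥ 1, and let f₁, …, f_K : (0,1] → {0,1} be step functions, each with at most N discontinuities, satisfying the consistency condition max(U(x), K − U(x)) > (3/4)K for all x ∈ (0,1], where U(x) = #{i : f_i(x) = 1}. Then the majority-vote function g (g(x) = 1 if U(x)/K ≥ 1/2 and g(x) = 0 otherwise) satisfies μ({x ∈ (0,1] : f(x) = g(x)}) ≤ 1 − 2^{−4N}, where μ is the Lebesgue measure. -/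
import Mathlib


open MeasureTheory

/-- `g : (0,1] → T` is a step function with at most `M` discontinuities:
there is a partition `0 = α_{p+1} < α_p < ⋯ < α_1 < α_0 = 1` of `(0,1]` with
`p ≤ M`, into at most `M + 1` left-open right-closed intervals, on each of
which `g` is constant. -/
def IsStepFun {T : Type*} (M : ℕ) (g : ℝ → T) : Prop :=
  ∃ p ≤ M, ∃ α : Fin (p + 2) → ℝ,
    α 0 = 1 ∧ α (Fin.last (p + 1)) = 0 ∧ StrictAnti α ∧
    ∀ k : Fin (p + 1), ∃ c : T, ∀ x ∈ Set.Ioc (α k.succ) (α k.castSucc), g x = c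

open Classical in
/-- The alternating dyadic function `f : (0,1] → {0,1}`: `f(x) = 1` iff
`x ∈ (2^{-n-1}, 2^{-n}]` for some even `n ≥ 0`. -/
noncomputable def fDyadic (x : ℝ) : Bool :=
  decide (∃ n : ℕ, Even n ∧ x ∈ Set.Ioc ((2 : ℝ) ^ (-(n : ℤ) - 1)) ((2 : ℝ) ^ (-(n : ℤ))))

/-- `U(x) = #{i : f_i(x) = 1}`. -/
def Ucount {K : ℕ} (f : Fin K → ℝ → Bool) (x : ℝ) : ℕ :=
  (Finset.univ.filter fun i => f i x = true).card

/-- The majority-vote function: `g(x) = 1` iff `U(x)/K ≥ 1/2`. -/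
noncomputable def majority {K : ℕ} (f : Fin K → ℝ → Bool) (x : ℝ) : Bool :=
  decide ((1 : ℝ) / 2 ≤ (Ucount f x : ℝ) / K)

/-! ### Auxiliary lemmas -/

lemma dyadic_unique' {n m : ℕ} {x : ℝ}
    (h1 : x ∈ Set.Ioc ((2:ℝ)^(-(n:ℤ)-1)) ((2:ℝ)^(-(n:ℤ))))
    (h2 : x ∈ Set.Ioc ((2:ℝ)^(-(m:ℤ)-1)) ((2:ℝ)^(-(m:ℤ)))) : n = m := by
  have hb : (1:ℝ) < 2 := one_lt_two
  have h1' : -(n:ℤ)-1 < -(m:ℤ) :=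
    (zpow_lt_zpow_iff_right₀ hb).mp (lt_of_lt_of_le h1.1 h2.2)
  have h2' : -(m:ℤ)-1 < -(n:ℤ) :=
    (zpow_lt_zpow_iff_right₀ hb).mp (lt_of_lt_of_le h2.1 h1.2)
  omega

lemma fDyadic_eq' {n : ℕ} {x : ℝ}
    (hx : x ∈ Set.Ioc ((2:ℝ)^(-(n:ℤ)-1)) ((2:ℝ)^(-(n:ℤ)))) :
    fDyadic x = decide (Even n) := by
  simp only [fDyadic]
  rw [decide_eq_decide]
  constructor
  · rintro ⟨m, hm, hxm⟩
    exact dyadic_unique' hxm hx ▸ hm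
  · exact fun h => ⟨n, h, hx⟩

lemma mem_cell' {p : ℕ} {α : Fin (p + 2) → ℝ} (h0 : α 0 = 1)
    (hl : α (Fin.last (p + 1)) = 0) {x : ℝ} (hx : x ∈ Set.Ioc (0:ℝ) 1) :
    ∃ k : Fin (p + 1), x ∈ Set.Ioc (α k.succ) (α k.castSucc) := by
  have hS : (Finset.univ.filter (fun k : Fin (p+2) => x ≤ α k)).Nonempty :=
    ⟨0, by simp [h0, hx.2]⟩
  set S := Finset.univ.filter (fun k : Fin (p+2) => x ≤ α k) with hSdef
  obtain ⟨m, hmS, hmax⟩ := S.exists_max_image id hS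
  have hm : x ≤ α m := by simpa [hSdef] using hmS
  have hmlt : (m : ℕ) < p + 1 := by
    rcases lt_or_eq_of_le (Nat.lt_succ_iff.mp m.isLt) with h | h
    · exact h
    · exfalso
      have : m = Fin.last (p+1) := Fin.ext h
      rw [this, hl] at hm
      exact absurd hx.1 (not_lt.mpr hm)
  refine ⟨⟨m, hmlt⟩, ?_, ?_⟩
  · by_contra hc
    push_neg at hc
    have hmem : (⟨(m:ℕ)+1, by omega⟩ : Fin (p+2)) ∈ S := by
      simp [hSdef]; exact hc
    have := hmax _ hmem
    simp only [id, Fin.le_def] at this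
    omega
  · simpa using hm

lemma cut_exists' {T : Type*} {p : ℕ} {α : Fin (p + 2) → ℝ} {g : ℝ → T}
    (h0 : α 0 = 1) (hl : α (Fin.last (p + 1)) = 0) (ha : StrictAnti α)
    (hc : ∀ k : Fin (p + 1), ∃ c : T, ∀ x ∈ Set.Ioc (α k.succ) (α k.castSucc), g x = c)
    {u v : ℝ} (hu : u ∈ Set.Ioc (0:ℝ) 1) (hv : v ∈ Set.Ioc (0:ℝ) 1)
    (huv : u < v) (hg : g u ≠ g v) :
    ∃ k : Fin (p + 2), 1 ≤ (k:ℕ) ∧ (k:ℕ) ≤ p ∧ u ≤ α k ∧ α k < v := by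
  obtain ⟨a, hua⟩ := mem_cell' h0 hl hu
  obtain ⟨b, hvb⟩ := mem_cell' h0 hl hv
  obtain ⟨ca, hca⟩ := hc a
  obtain ⟨cb, hcb⟩ := hc b
  have hab : a ≠ b := by
    rintro rfl
    exact hg ((hca u hua).trans (hca v hvb).symm)
  have hba : (b:ℕ) < (a:ℕ) := by
    rcases lt_or_gt_of_ne (fun h => hab (Fin.ext h)) with h | h
    · exfalso
      have h1 : α b.castSucc ≤ α a.succ := ha.antitone (by simp [Fin.le_def]; omega)
      linarith [hvb.2, hua.1]
    · exact h
  refine ⟨a.castSucc, by simp [Fin.castSucc]; omega, by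
      have := a.isLt; simp [Fin.castSucc]; omega, hua.2, ?_⟩
  have h2 : α a.castSucc ≤ α b.succ := ha.antitone (by simp [Fin.le_def]; omega)
  linarith [hvb.1]

lemma Ucount_gt' {K : ℕ} (hK : 1 ≤ K) (f : Fin K → ℝ → Bool) {x : ℝ}
    (hmax : (3 / 4 : ℝ) * K < max ((Ucount f x : ℝ)) ((K : ℝ) - (Ucount f x : ℝ)))
    (h : majority f x = true) : (3 / 4 : ℝ) * K < (Ucount f x : ℝ) := by
  have hKpos : (0:ℝ) < K := by exact_mod_cast hK
  have h2 : (1:ℝ)/2 ≤ (Ucount f x : ℝ) / K := by simpa [majority] using h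
  have h3 : (K:ℝ)/2 ≤ (Ucount f x : ℝ) := by
    rw [div_le_div_iff₀ (by norm_num) hKpos] at h2; linarith
  rcases max_cases ((Ucount f x : ℝ)) ((K : ℝ) - (Ucount f x : ℝ)) with ⟨he, _⟩ | ⟨he, _⟩ <;>
    rw [he] at hmax <;> linarith

lemma Ucount_lt' {K : ℕ} (hK : 1 ≤ K) (f : Fin K → ℝ → Bool) {x : ℝ}
    (hmax : (3 / 4 : ℝ) * K < max ((Ucount f x : ℝ)) ((K : ℝ) - (Ucount f x : ℝ)))
    (h : majority f x = false) : (Ucount f x : ℝ) < (1 / 4 : ℝ) * K := by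
  have hKpos : (0:ℝ) < K := by exact_mod_cast hK
  have h2 : ¬ ((1:ℝ)/2 ≤ (Ucount f x : ℝ) / K) := by simpa [majority] using h
  push_neg at h2
  have h3 : (Ucount f x : ℝ) < (K:ℝ)/2 := by
    rw [div_lt_div_iff₀ hKpos (by norm_num : (0:ℝ) < 2)] at h2; linarith
  rcases max_cases ((Ucount f x : ℝ)) ((K : ℝ) - (Ucount f x : ℝ)) with ⟨he, _⟩ | ⟨he, _⟩ <;>
    rw [he] at hmax <;> linarith

lemma Ucount_le_add' {K : ℕ} (f : Fin K → ℝ → Bool) (x y : ℝ) :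
    Ucount f x ≤ Ucount f y + (Finset.univ.filter fun i => f i x ≠ f i y).card := by
  have hsub : (Finset.univ.filter fun i => f i x = true) ⊆
      (Finset.univ.filter fun i => f i y = true) ∪
      (Finset.univ.filter fun i => f i x ≠ f i y) := by
    intro i hi
    simp only [Finset.mem_filter, Finset.mem_union, Finset.mem_univ, true_and] at *
    by_cases h : f i y = true
    · exact Or.inl h
    · exact Or.inr (by simp [hi, Bool.not_eq_true] at *; simp [hi, h])
  calc Ucount f x ≤ _ := Finset.card_le_card hsub
    _ ≤ _ := Finset.card_union_le _ _

lemma measure_sub_interval' (S : Set ℝ) (c d : ℝ) (hc : 0 ≤ c) (hd : d ≤ 1)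
    (hS : S ⊆ Set.Ioc 0 1 \ Set.Ioc c d) :
    volume S ≤ ENNReal.ofReal (1 - (d - c)) := by
  have hsub : Set.Ioc (0:ℝ) 1 \ Set.Ioc c d ⊆ Set.Ioc 0 c ∪ Set.Ioc d 1 := by
    rintro x ⟨⟨h0, h1⟩, hnd⟩
    simp only [Set.mem_Ioc, not_and, not_le] at hnd
    simp only [Set.mem_union, Set.mem_Ioc]
    by_cases h : x ≤ c
    · exact Or.inl ⟨h0, h⟩
    · exact Or.inr ⟨hnd (not_le.mp h), h1⟩
  calc volume S ≤ volume (Set.Ioc (0:ℝ) c ∪ Set.Ioc d 1) := measure_mono (hS.trans hsub)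
    _ ≤ volume (Set.Ioc (0:ℝ) c) + volume (Set.Ioc d 1) := measure_union_le _ _
    _ = ENNReal.ofReal c + ENNReal.ofReal (1 - d) := by
        rw [Real.volume_Ioc, Real.volume_Ioc]; simp
    _ = ENNReal.ofReal (c + (1 - d)) := (ENNReal.ofReal_add hc (by linarith)).symm
    _ = ENNReal.ofReal (1 - (d - c)) := by ring_nf

/-- For every family `f₁, …, f_K : (0,1] → {0,1}` of step functions with at most `N`
discontinuities each, whose consistency `max(U(x), K - U(x)) > (3/4)K` holds for all
`x ∈ (0,1]`, the majority vote `g` agrees with the alternating dyadic function `f`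
on a set of measure at most `1 - 2^{-4N}`. -/
theorem majority_vote_agreement_le_one_sub_two_pow_neg_four_N
    (N : ℕ) (hN : 0 < N) (K : ℕ) (hK : 1 ≤ K) (f : Fin K → ℝ → Bool)
    (hstep : ∀ i, IsStepFun N (f i))
    (hcons : ∀ x ∈ Set.Ioc (0 : ℝ) 1,
      (3 / 4 : ℝ) * K < max ((Ucount f x : ℝ)) ((K : ℝ) - (Ucount f x : ℝ))) :
    volume {x ∈ Set.Ioc (0 : ℝ) 1 | fDyadic x = majority f x} ≤
      ENNReal.ofReal (1 - (2 : ℝ) ^ (-(4 * N : ℤ))) := by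
  -- the j-th pair interval
  set J : ℕ → Set ℝ := fun j => Set.Ioc ((2:ℝ)^(-(2*j:ℤ)-2)) ((2:ℝ)^(-(2*j:ℤ))) with hJdef
  have hJsub : ∀ j, J j ⊆ Set.Ioc (0:ℝ) 1 := by
    intro j x hx
    refine ⟨lt_trans (by positivity) hx.1, hx.2.trans ?_⟩
    calc (2:ℝ)^(-(2*j:ℤ)) ≤ (2:ℝ)^(0:ℤ) := zpow_le_zpow_right₀ one_le_two (by omega)
      _ = 1 := zpow_zero 2
  -- Step 1: majority is constant on some pair interval J j, j < 2N
  have key : ∃ j < 2*N, ∀ x ∈ J j, ∀ y ∈ J j, majority f x = majority f y := by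
    by_contra hcon
    push_neg at hcon
    have hcon' : ∀ j : ℕ, ∃ x y : ℝ, j < 2*N →
        x ∈ J j ∧ y ∈ J j ∧ majority f x = true ∧ majority f y = false := by
      intro j
      by_cases hj : j < 2*N
      · obtain ⟨x, hx, y, hy, hxy⟩ := hcon j hj
        cases hgx : majority f x
        · have hgy : majority f y = true := by
            cases hgy : majority f y
            · exact absurd (hgx.trans hgy.symm) hxy
            · rfl
          exact ⟨y, x, fun _ => ⟨hy, hx, hgy, hgx⟩⟩
        · have hgy : majority f y = false := by
            cases hgy : majority f y
            · rfl
            · exact absurd (hgx.trans hgy.symm) hxy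
          exact ⟨x, y, fun _ => ⟨hx, hy, hgx, hgy⟩⟩
      · exact ⟨1, 1, fun h => absurd h hj⟩
    choose xw yw hw using hcon'
    set T : ℕ → Finset (Fin K) :=
      fun j => Finset.univ.filter (fun i => f i (xw j) ≠ f i (yw j)) with hTdef
    -- each T j is large
    have hT : ∀ j < 2*N, K + 1 ≤ 2 * (T j).card := by
      intro j hj
      obtain ⟨hx, hy, hgx, hgy⟩ := hw j hj
      have h1 := Ucount_gt' hK f (hcons _ (hJsub j hx)) hgx
      have h2 := Ucount_lt' hK f (hcons _ (hJsub j hy)) hgy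
      have h3 := Ucount_le_add' f (xw j) (yw j)
      have h4 : (Ucount f (xw j) : ℝ) ≤ (Ucount f (yw j) : ℝ) + ((T j).card : ℝ) := by
        exact_mod_cast h3
      have h5 : (K:ℝ) < 2 * ((T j).card : ℝ) := by linarith
      have h6 : K < 2 * (T j).card := by exact_mod_cast h5
      omega
    -- per-function bound on the number of j's where it switches
    have hTi : ∀ i : Fin K,
        ((Finset.range (2*N)).filter (fun j => i ∈ T j)).card ≤ N := by
      intro i
      obtain ⟨p, hpN, α, h0, hl, ha, hc⟩ := hstep i
      have hcut : ∀ j : ℕ, ∃ k : Fin (p+2), i ∈ T j → j < 2*N →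
          1 ≤ (k:ℕ) ∧ (k:ℕ) ≤ p ∧ α k ∈ Set.Ioo ((2:ℝ)^(-(2*j:ℤ)-2)) ((2:ℝ)^(-(2*j:ℤ))) := by
        intro j
        by_cases hij : i ∈ T j ∧ j < 2*N
        · obtain ⟨hiT, hj⟩ := hij
          obtain ⟨hx, hy, _, _⟩ := hw j hj
          have hne : f i (xw j) ≠ f i (yw j) := by
            simpa [hTdef] using hiT
          have hxy : xw j ≠ yw j := fun h => hne (h ▸ rfl)
          rcases lt_or_gt_of_ne hxy with h | h
          · obtain ⟨k, hk1, hk2, hk3, hk4⟩ :=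
              cut_exists' h0 hl ha hc (hJsub j hx) (hJsub j hy) h hne
            exact ⟨k, fun _ _ => ⟨hk1, hk2, lt_of_lt_of_le hx.1 hk3,
              lt_of_lt_of_le hk4 hy.2⟩⟩
          · obtain ⟨k, hk1, hk2, hk3, hk4⟩ :=
              cut_exists' h0 hl ha hc (hJsub j hy) (hJsub j hx) h (Ne.symm hne)
            exact ⟨k, fun _ _ => ⟨hk1, hk2, lt_of_lt_of_le hy.1 hk3,
              lt_of_lt_of_le hk4 hx.2⟩⟩
        · exact ⟨0, fun h1 h2 => absurd ⟨h1, h2⟩ hij⟩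
      choose kf hkf using hcut
      have hinj : ∀ j ∈ (Finset.range (2*N)).filter (fun j => i ∈ T j),
          ∀ j' ∈ (Finset.range (2*N)).filter (fun j => i ∈ T j),
          ((kf j : ℕ)) = ((kf j' : ℕ)) → j = j' := by
        intro j hj j' hj' hkk
        simp only [Finset.mem_filter, Finset.mem_range] at hj hj'
        obtain ⟨_, _, hmem⟩ := hkf j hj.2 hj.1
        obtain ⟨_, _, hmem'⟩ := hkf j' hj'.2 hj'.1
        have heq : α (kf j) = α (kf j') := congrArg α (Fin.ext hkk)
        by_contra hne
        rcases lt_or_gt_of_ne hne with h | h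
        · have hle : (2:ℝ)^(-(2*j':ℤ)) ≤ (2:ℝ)^(-(2*j:ℤ)-2) :=
            zpow_le_zpow_right₀ one_le_two (by omega)
          rw [heq] at hmem
          linarith [hmem.1, hmem'.2]
        · have hle : (2:ℝ)^(-(2*j:ℤ)) ≤ (2:ℝ)^(-(2*j':ℤ)-2) :=
            zpow_le_zpow_right₀ one_le_two (by omega)
          rw [heq] at hmem
          linarith [hmem.2, hmem'.1]
      have hmap : ∀ j ∈ (Finset.range (2*N)).filter (fun j => i ∈ T j),
          ((kf j : ℕ)) ∈ Finset.Icc 1 p := by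
        intro j hj
        simp only [Finset.mem_filter, Finset.mem_range] at hj
        obtain ⟨h1, h2, _⟩ := hkf j hj.2 hj.1
        exact Finset.mem_Icc.mpr ⟨h1, h2⟩
      calc ((Finset.range (2*N)).filter (fun j => i ∈ T j)).card
          ≤ (Finset.Icc 1 p).card := Finset.card_le_card_of_injOn _ hmap (fun a ha b hb => hinj a ha b hb)
        _ = p := by rw [Nat.card_Icc]; omega
        _ ≤ N := hpN
    -- double counting
    have hsum : ∑ j ∈ Finset.range (2*N), (T j).card ≤ K * N := by
      have h1 : ∀ j, (T j).card = ∑ i : Fin K, if i ∈ T j then 1 else 0 := by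
        intro j
        rw [Finset.sum_ite_mem]
        simp
      calc ∑ j ∈ Finset.range (2*N), (T j).card
          = ∑ j ∈ Finset.range (2*N), ∑ i : Fin K, if i ∈ T j then 1 else 0 := by
            simp_rw [h1]
        _ = ∑ i : Fin K, ∑ j ∈ Finset.range (2*N), if i ∈ T j then 1 else 0 :=
            Finset.sum_comm
        _ = ∑ i : Fin K, ((Finset.range (2*N)).filter (fun j => i ∈ T j)).card := by
            refine Finset.sum_congr rfl fun i _ => ?_
            rw [Finset.card_filter]
        _ ≤ ∑ _i : Fin K, N := Finset.sum_le_sum fun i _ => hTi i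
        _ = K * N := by simp [Finset.sum_const, mul_comm]
    have hsum2 : 2*N*(K+1) ≤ ∑ j ∈ Finset.range (2*N), 2 * (T j).card := by
      calc 2*N*(K+1) = ∑ _j ∈ Finset.range (2*N), (K+1) := by
            rw [Finset.sum_const, Finset.card_range]; ring
        _ ≤ _ := Finset.sum_le_sum fun j hj => hT j (Finset.mem_range.mp hj)
    rw [← Finset.mul_sum] at hsum2
    have hcontra : 2*(K*N) + 2*N ≤ 2*(K*N) := by
      calc 2*(K*N) + 2*N = 2*N*(K+1) := by ring
        _ ≤ 2 * ∑ j ∈ Finset.range (2*N), (T j).card := hsum2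
        _ ≤ 2 * (K*N) := by omega
    omega
  -- Step 2: use the constant pair interval to find a disagreement interval
  obtain ⟨j, hj, hconst⟩ := key
  set w : ℝ := (2:ℝ)^(-(2*j:ℤ)) with hwdef
  have hwJ : w ∈ J j := ⟨zpow_lt_zpow_right₀ one_lt_two (by omega), le_refl _⟩
  -- choose n = 2j or 2j+1 so that fDyadic ≠ majority on (2^{-n-1}, 2^{-n}]
  have main : ∃ n : ℕ, n + 1 ≤ 4*N ∧
      ∀ x ∈ Set.Ioc ((2:ℝ)^(-(n:ℤ)-1)) ((2:ℝ)^(-(n:ℤ))), fDyadic x ≠ majority f x := by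
    have hDsub : ∀ n : ℕ, n = 2*j ∨ n = 2*j+1 →
        Set.Ioc ((2:ℝ)^(-(n:ℤ)-1)) ((2:ℝ)^(-(n:ℤ))) ⊆ J j := by
      intro n hn x hx
      constructor
      · refine lt_of_le_of_lt ?_ hx.1
        exact zpow_le_zpow_right₀ one_le_two (by omega)
      · refine hx.2.trans ?_
        exact zpow_le_zpow_right₀ one_le_two (by omega)
    cases hgw : majority f w
    · -- majority is false on J j; use even interval n = 2j where fDyadic = true
      refine ⟨2*j, by omega, fun x hx hagree => ?_⟩
      have hxJ : x ∈ J j := hDsub (2*j) (Or.inl rfl) (by exact_mod_cast hx)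
      have h1 : fDyadic x = true := by
        rw [fDyadic_eq' (n := 2*j) (by exact_mod_cast hx)]
        simp [Nat.even_mul]
      have h2 : majority f x = false := (hconst x hxJ w hwJ).trans hgw
      rw [h1, h2] at hagree
      exact Bool.true_eq_false ▸ (by simpa using hagree)
    · -- majority is true on J j; use odd interval n = 2j+1 where fDyadic = false
      refine ⟨2*j+1, by omega, fun x hx hagree => ?_⟩
      have hxJ : x ∈ J j := hDsub (2*j+1) (Or.inr rfl) (by exact_mod_cast hx)
      have h1 : fDyadic x = false := by
        rw [fDyadic_eq' (n := 2*j+1) (by exact_mod_cast hx)]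
        simp [Nat.even_add_one, Nat.even_mul]
      have h2 : majority f x = true := (hconst x hxJ w hwJ).trans hgw
      rw [h1, h2] at hagree
      exact (by simpa using hagree)
  obtain ⟨n, hn, hdis⟩ := main
  set c : ℝ := (2:ℝ)^(-(n:ℤ)-1) with hcdef
  set d : ℝ := (2:ℝ)^(-(n:ℤ)) with hddef
  have hbound : volume {x ∈ Set.Ioc (0 : ℝ) 1 | fDyadic x = majority f x} ≤
      ENNReal.ofReal (1 - (d - c)) := by
    apply measure_sub_interval'
    · positivity
    · calc d ≤ (2:ℝ)^(0:ℤ) := zpow_le_zpow_right₀ one_le_two (by omega)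
        _ = 1 := zpow_zero 2
    · rintro x ⟨hx01, hagree⟩
      refine ⟨hx01, fun hxcd => hdis x hxcd hagree⟩
  refine hbound.trans (ENNReal.ofReal_le_ofReal ?_)
  have hdc : d - c = c := by
    have h2 : d = c * 2 := by
      show (2:ℝ)^(-(n:ℤ)) = (2:ℝ)^(-(n:ℤ)-1) * 2
      rw [← zpow_add_one₀ (by norm_num : (2:ℝ) ≠ 0)]
      congr 1
      ring
    rw [h2]; ring
  rw [hdc]
  have : (2:ℝ)^(-(4*N:ℤ)) ≤ c :=
    zpow_le_zpow_right₀ one_le_two (by omega)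
  linarith
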